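/- Fix g ≥ 2, χ ∈ ℤ, and an antichain A ⊆ D_{g,1}^{≥g}. Define τ_A : D_{g,1}^{pr} → ℤ by τ_A(x) = 2 if x > y for some y ∈ A, and τ_A(x) = 1 otherwise. Then for any x₁, x₂ ∈ D_{g,1}^{pr} such that x₁ ∘ᵢ x₂ is defined, one has: τ_A(x₁ ∘ᵢ x₂) - τ_A(x₁) - τ_A(x₂) = 0 if x₁ ∈ A or x₂ ∈ A; = -1 if x₁, x₂ ∉ A and x₁ ∘ᵢ x₂ ∈ A; and lies in {0,-1} otherwise. -/
import Mathlib


/-- Membership of a pair `(e,h)` in the primitive stability domain `𝔻_{g,1}^{pr}`. -/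
def DprMem (g : ℤ) (x : ℤ × ℤ) : Prop :=
  2 ≤ x.1 ∧ 0 ≤ x.2 ∧ x.2 ≤ g - x.1 + 1 ∧
  0 < 2 * x.2 - 2 + x.1 ∧ 0 < 2 * g - 2 * x.2 - x.1 + 1

/-- The partial order on `𝔻_{g,1}^{pr}`. -/
def DprLe (x y : ℤ × ℤ) : Prop := x.2 ≤ y.2 ∧ x.1 + x.2 ≤ y.1 + y.2

/-- Strict order on `𝔻_{g,1}^{pr}`. -/
def DprLt (x y : ℤ × ℤ) : Prop := DprLe x y ∧ x ≠ y

lemma dpr_antisymm (x y : ℤ × ℤ) (h1 : DprLe x y) (h2 : DprLe y x) : x = y := by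
  obtain ⟨a, b⟩ := h1; obtain ⟨c, d⟩ := h2
  rw [Prod.ext_iff]; omega

lemma dpr_delta_mono (x y : ℤ × ℤ) (h : DprLe x y) :
    2 * x.2 - 2 + x.1 ≤ 2 * y.2 - 2 + y.1 := by
  obtain ⟨a, b⟩ := h; omega

/-- For an antichain `A ⊆ 𝔻_{g,1}^{≥g}`, the function `τ_A` (value `2` on elements
strictly dominating some element of `A`, and `1` otherwise) satisfies the
V-function triangle relations with respect to compositions: whenever
`x₁ ∘ᵢ x₂` is defined, `τ_A(x₁ ∘ᵢ x₂) - τ_A(x₁) - τ_A(x₂)` equals `0` if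
`x₁ ∈ A` or `x₂ ∈ A`; equals `-1` if `x₁, x₂ ∉ A` and `x₁ ∘ᵢ x₂ ∈ A`; and lies
in `{0, -1}` otherwise. -/
theorem stmt16 (g : ℤ) (hg : 2 ≤ g) (χ : ℤ) (A : Set (ℤ × ℤ))
    (hAsub : ∀ x ∈ A, DprMem g x ∧ g ≤ 2 * x.2 - 2 + x.1)
    (hAanti : ∀ x ∈ A, ∀ y ∈ A, DprLe x y → x = y)
    (τ : ℤ × ℤ → ℤ)
    (hτ2 : ∀ x : ℤ × ℤ, (∃ y ∈ A, DprLt y x) → τ x = 2)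
    (hτ1 : ∀ x : ℤ × ℤ, ¬(∃ y ∈ A, DprLt y x) → τ x = 1)
    (x1 x2 : ℤ × ℤ) (hx1 : DprMem g x1) (hx2 : DprMem g x2) (i : ℤ)
    (hi1 : max 1 (x1.2 + x2.2 + x1.1 + x2.1 - g - 2) ≤ i)
    (hi2 : i ≤ min (x1.1 - 1) (x2.1 - 1)) :
    (x1 ∈ A ∨ x2 ∈ A →
      τ (x1.1 + x2.1 - 2 * i, x1.2 + x2.2 + i - 1) - τ x1 - τ x2 = 0) ∧
    (x1 ∉ A → x2 ∉ A → (x1.1 + x2.1 - 2 * i, x1.2 + x2.2 + i - 1) ∈ A →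
      τ (x1.1 + x2.1 - 2 * i, x1.2 + x2.2 + i - 1) - τ x1 - τ x2 = -1) ∧
    (x1 ∉ A → x2 ∉ A → (x1.1 + x2.1 - 2 * i, x1.2 + x2.2 + i - 1) ∉ A →
      (τ (x1.1 + x2.1 - 2 * i, x1.2 + x2.2 + i - 1) - τ x1 - τ x2 = 0 ∨
       τ (x1.1 + x2.1 - 2 * i, x1.2 + x2.2 + i - 1) - τ x1 - τ x2 = -1)) := by

  obtain ⟨he1, hh1, hgh1, hd1, hd1'⟩ := hx1
  obtain ⟨he2, hh2, hgh2, hd2, hd2'⟩ := hx2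
  rw [max_le_iff] at hi1
  rw [le_min_iff] at hi2
  set z : ℤ × ℤ := (x1.1 + x2.1 - 2 * i, x1.2 + x2.2 + i - 1) with hzdef
  have hz1 : z.1 = x1.1 + x2.1 - 2 * i := rfl
  have hz2 : z.2 = x1.2 + x2.2 + i - 1 := rfl
  have hle1 : DprLe x1 z := ⟨by omega, by omega⟩
  have hle2 : DprLe x2 z := ⟨by omega, by omega⟩
  have hne1 : x1 ≠ z := by
    intro h
    have h1 := congrArg Prod.fst h
    have h2 := congrArg Prod.snd h
    simp only [hz1, hz2] at h1 h2
    omega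
  have hne2 : x2 ≠ z := by
    intro h
    have h1 := congrArg Prod.fst h
    have h2 := congrArg Prod.snd h
    simp only [hz1, hz2] at h1 h2
    omega
  -- τ x = 1 when δ x ≤ g - 1
  have htau_small : ∀ x : ℤ × ℤ, 2 * x.2 - 2 + x.1 ≤ g - 1 → τ x = 1 := by
    intro x hx
    apply hτ1
    rintro ⟨y, hyA, ⟨hyle, -⟩⟩
    have hy := (hAsub y hyA).2
    have := dpr_delta_mono y x hyle
    omega
  -- τ x = 1 when x ∈ A
  have htau_inA : ∀ x ∈ A, τ x = 1 := by
    intro x hxA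
    apply hτ1
    rintro ⟨y, hyA, ⟨hyle, hyne⟩⟩
    exact hyne (hAanti y hyA x hxA hyle)
  -- dominating an A-element forces large δ
  have hbig : ∀ x : ℤ × ℤ, (∃ y ∈ A, DprLt y x) → g ≤ 2 * x.2 - 2 + x.1 := by
    rintro x ⟨y, hyA, ⟨hyle, -⟩⟩
    have hy := (hAsub y hyA).2
    have := dpr_delta_mono y x hyle
    omega
  -- δ z ≤ 2g - 2
  have hdz : 2 * z.2 - 2 + z.1 ≤ 2 * g - 2 := by
    simp only [hz1, hz2]; omega
  have hadd : 2 * z.2 - 2 + z.1 = (2 * x1.2 - 2 + x1.1) + (2 * x2.2 - 2 + x2.1) := by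
    rw [hz1, hz2]; ring
  refine ⟨?_, ?_, ?_⟩
  · rintro (h1A | h2A)
    · have t1 : τ x1 = 1 := htau_inA x1 h1A
      have hgd : g ≤ 2 * x1.2 - 2 + x1.1 := (hAsub x1 h1A).2
      have t2 : τ x2 = 1 := by
        apply htau_small
        omega
      have tz : τ z = 2 := hτ2 z ⟨x1, h1A, hle1, hne1⟩
      omega
    · have t2 : τ x2 = 1 := htau_inA x2 h2A
      have hgd : g ≤ 2 * x2.2 - 2 + x2.1 := (hAsub x2 h2A).2
      have t1 : τ x1 = 1 := by
        apply htau_small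
        omega
      have tz : τ z = 2 := hτ2 z ⟨x2, h2A, hle2, hne2⟩
      omega
  · intro hn1 hn2 hzA
    have tz : τ z = 1 := htau_inA z hzA
    have t1 : τ x1 = 1 := by
      apply hτ1
      rintro ⟨y, hyA, ⟨hyle, hyne⟩⟩
      have hylez : DprLe y z := ⟨by have := hle1.1; have := hyle.1; omega,
        by have := hle1.2; have := hyle.2; omega⟩
      have heq : y = z := hAanti y hyA z hzA hylez
      rw [heq] at hyle
      exact hne1 (dpr_antisymm x1 z hle1 hyle)
    have t2 : τ x2 = 1 := by
      apply hτ1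
      rintro ⟨y, hyA, ⟨hyle, hyne⟩⟩
      have hylez : DprLe y z := ⟨by have := hle2.1; have := hyle.1; omega,
        by have := hle2.2; have := hyle.2; omega⟩
      have heq : y = z := hAanti y hyA z hzA hylez
      rw [heq] at hyle
      exact hne2 (dpr_antisymm x2 z hle2 hyle)
    omega
  · intro hn1 hn2 hzn
    by_cases H1 : ∃ y ∈ A, DprLt y x1
    · have t1 : τ x1 = 2 := hτ2 x1 H1
      have hgd := hbig x1 H1
      have t2 : τ x2 = 1 := by
        apply htau_small
        omega
      obtain ⟨y, hyA, ⟨hyle, hyne⟩⟩ := H1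
      have hylez : DprLe y z := ⟨by have := hle1.1; have := hyle.1; omega,
        by have := hle1.2; have := hyle.2; omega⟩
      have hynez : y ≠ z := by
        intro h
        rw [h] at hyle
        exact hne1 (dpr_antisymm x1 z hle1 hyle)
      have tz : τ z = 2 := hτ2 z ⟨y, hyA, hylez, hynez⟩
      right; omega
    · have t1 : τ x1 = 1 := hτ1 x1 H1
      by_cases H2 : ∃ y ∈ A, DprLt y x2
      · have t2 : τ x2 = 2 := hτ2 x2 H2
        obtain ⟨y, hyA, ⟨hyle, hyne⟩⟩ := H2
        have hylez : DprLe y z := ⟨by have := hle2.1; have := hyle.1; omega,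
          by have := hle2.2; have := hyle.2; omega⟩
        have hynez : y ≠ z := by
          intro h
          rw [h] at hyle
          exact hne2 (dpr_antisymm x2 z hle2 hyle)
        have tz : τ z = 2 := hτ2 z ⟨y, hyA, hylez, hynez⟩
        right; omega
      · have t2 : τ x2 = 1 := hτ1 x2 H2
        by_cases Hz : ∃ y ∈ A, DprLt y z
        · have tz : τ z = 2 := hτ2 z Hz
          left; omega
        · have tz : τ z = 1 := hτ1 z Hz
          right; omega
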